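/- arXiv:2601.10249 — 2 statements merged into one kernel-verified Lean document; each statement's English description precedes it below -/
import Mathlib

section
/- Bound and limit for β_r (Claim 'Bounds on H_r and β_r', parts (b) and (c)): Fix an integer Δ ≥ 3. For every r ∈ R_Δ and every t ≥ 0 one has |β_r(t)| ≤ 2·Δ²·(Δ+1); moreover β_r(t) converges to Υ_r as t → ∞, uniformly in r ∈ R_Δ: for every η > 0 there exists T > 0 such that |β_r(t) − Υ_r| ≤ η for all t ≥ T and all r ∈ R_Δ. -/
open Real MeasureTheory Filter

noncomputable section

/-- Tail sums: `s_k = Σ_{d=k}^Δ r_d` (also used as `q_k` for distributions `p`). -/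
def tailS (Δ : ℕ) (r : ℕ → ℝ) (k : ℕ) : ℝ := ∑ d ∈ Finset.Icc k Δ, r d

/-- Membership in the set `R_Δ`: `r_2 = -1`, `r_k ≥ 0` for `3 ≤ k ≤ Δ`, `r_k = 0` for `k > Δ`,
and `Σ_{k=3}^Δ r_k = 1`. -/
def memR (Δ : ℕ) (r : ℕ → ℝ) : Prop :=
  r 2 = -1 ∧ (∀ k, 3 ≤ k → k ≤ Δ → 0 ≤ r k) ∧ (∀ k, Δ < k → r k = 0) ∧
    (∑ k ∈ Finset.Icc 3 Δ, r k) = 1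

/-- The Molloy–Reed constant `Υ_r = Σ_{k=3}^Δ k(k-2) r_k`. -/
def Upsilon (Δ : ℕ) (r : ℕ → ℝ) : ℝ := ∑ k ∈ Finset.Icc 3 Δ, (k : ℝ) * ((k : ℝ) - 2) * r k

/-- `Λ_r(t) = λ'(t) · ∫_0^{λ(t)} e^x/(1+x)² · (Σ_{k=2}^{Δ-1} x^k/k! · s_{k+1}) dx`. -/
def LamErr (lam : ℝ → ℝ) (Δ : ℕ) (r : ℕ → ℝ) (t : ℝ) : ℝ :=
  deriv lam t * ∫ x in (0:ℝ)..(lam t),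
    Real.exp x / (1 + x) ^ 2 *
      ∑ k ∈ Finset.Icc 2 (Δ - 1), x ^ k / (Nat.factorial k : ℝ) * tailS Δ r (k + 1)

/-- `H_r(t) = e^{-λ(t)} (Λ_r'(t) - λ'(t)Λ_r(t) + λ'(t) Σ_{k=0}^{Δ-2} λ(t)^k/k! · r_{k+2})`. -/
def Herr (lam : ℝ → ℝ) (Δ : ℕ) (r : ℕ → ℝ) (t : ℝ) : ℝ :=
  Real.exp (-lam t) *
    (deriv (LamErr lam Δ r) t - deriv lam t * LamErr lam Δ r t +
      deriv lam t * ∑ k ∈ Finset.range (Δ - 1), lam t ^ k / (Nat.factorial k : ℝ) * r (k + 2))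

/-- `I_r(t) = e^{-λ(t)} ( -Λ_r(t) + Σ_{k=1}^{Δ-2} λ(t)^k/k! · s_{k+2})`. -/
def Ierr (lam : ℝ → ℝ) (Δ : ℕ) (r : ℕ → ℝ) (t : ℝ) : ℝ :=
  Real.exp (-lam t) *
    (-LamErr lam Δ r t +
      ∑ k ∈ Finset.Icc 1 (Δ - 2), lam t ^ k / (Nat.factorial k : ℝ) * tailS Δ r (k + 2))

/-- `u(t) = 1 + λ(t) ∫_0^t (λ'(s)-1)/λ(s)² ds`. -/
def uAux (lam : ℝ → ℝ) (t : ℝ) : ℝ :=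
  1 + lam t * ∫ s in (0:ℝ)..t, (deriv lam s - 1) / (lam s) ^ 2

/-- `α_r(t) = -∫_0^t u(s) H_r(s) λ(s) ds`. -/
def alphaAux (lam : ℝ → ℝ) (Δ : ℕ) (r : ℕ → ℝ) (t : ℝ) : ℝ :=
  -∫ s in (0:ℝ)..t, uAux lam s * Herr lam Δ r s * lam s

/-- `β_r(t) = ∫_0^t H_r(s) λ(s)² ds`. -/
def betaAux (lam : ℝ → ℝ) (Δ : ℕ) (r : ℕ → ℝ) (t : ℝ) : ℝ :=
  ∫ s in (0:ℝ)..t, Herr lam Δ r s * (lam s) ^ 2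

/-- `ω_r(t) = α_r(t) λ(t) + β_r(t) u(t)`. -/
def omegaAux (lam : ℝ → ℝ) (Δ : ℕ) (r : ℕ → ℝ) (t : ℝ) : ℝ :=
  alphaAux lam Δ r t * lam t + betaAux lam Δ r t * uAux lam t

/-- `t^-_{p,δ} = (1-δ)/(ε Υ_r)`. -/
def tMinus (Δ : ℕ) (r : ℕ → ℝ) (ε δ : ℝ) : ℝ := (1 - δ) / (ε * Upsilon Δ r)

/-- `t^+_{p,δ} = (1+δ)/(ε Υ_r)`. -/
def tPlus (Δ : ℕ) (r : ℕ → ℝ) (ε δ : ℝ) : ℝ := (1 + δ) / (ε * Upsilon Δ r)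

/-- `w^-_{p,δ}`. -/
def wMinus (lam : ℝ → ℝ) (Δ : ℕ) (r : ℕ → ℝ) (ε δ : ℝ) (t : ℝ) : ℝ :=
  if t ≤ tMinus Δ r ε δ then lam t + (1 + δ / 2) * ε * omegaAux lam Δ r t
  else lam (tMinus Δ r ε δ) + (1 + δ / 2) * ε * omegaAux lam Δ r (tMinus Δ r ε δ)

/-- `w^+_{p,δ}`. -/
def wPlus (lam : ℝ → ℝ) (Δ : ℕ) (r : ℕ → ℝ) (ε δ : ℝ) (t : ℝ) : ℝ :=
  if t ≤ tPlus Δ r ε δ then lam t + (1 - δ / 2) * ε * omegaAux lam Δ r t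
  else lam (tPlus Δ r ε δ) + (1 - δ / 2) * ε * omegaAux lam Δ r (tPlus Δ r ε δ)

/-- `Ī^-_{p,δ}(t) = e^{-λ(t)} + (1-δ) ε I_r(t)`. -/
def IbarMinus (lam : ℝ → ℝ) (Δ : ℕ) (r : ℕ → ℝ) (ε δ : ℝ) (t : ℝ) : ℝ :=
  Real.exp (-lam t) + (1 - δ) * ε * Ierr lam Δ r t

/-- `Ī^+_{p,δ}(t) = e^{-λ(t)} + (1+δ) ε I_r(t)`. -/
def IbarPlus (lam : ℝ → ℝ) (Δ : ℕ) (r : ℕ → ℝ) (ε δ : ℝ) (t : ℝ) : ℝ :=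
  Real.exp (-lam t) + (1 + δ) * ε * Ierr lam Δ r t

/-- `Ĩ_p(x) = e^{-x} (1 + ε Σ_{k=1}^{Δ-2} x^k/k! · s_{k+2})`. -/
def Itilde (Δ : ℕ) (r : ℕ → ℝ) (ε : ℝ) (x : ℝ) : ℝ :=
  Real.exp (-x) *
    (1 + ε * ∑ k ∈ Finset.Icc 1 (Δ - 2), x ^ k / (Nat.factorial k : ℝ) * tailS Δ r (k + 2))

/-!
Along the solution, `H_r λ² = G'(λ) λ'` for an explicit profile
`G(y) = Σ_{j=2}^Δ c_j P(N_y > j) + w(y) F(y)`, where `N_y` is Poisson of mean `y`,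
`c_j = j(j-1) r_j - s_{j+1}`, `F(y) = ∫_0^y e^x p(x)/(1+x)² dx` is the integral in `Λ_r` and
`w(y) = ∫_y^∞ e^{-2x} x² (1+2x) dx`; since `λ(0) = 0 = G(0)`, this gives `β_r(t) = G(λ(t))`.
Now `|c_j| ≤ Δ²`, and because the integrand of `F` is increasing,
`0 ≤ w(y) F(y) ≤ e^{-y} y (1+y) p(y)`, a combination of Poisson probabilities with coefficients
independent of `r`. This gives the bound, and since `Σ_j c_j = Υ_r` while every
`P(N_y ≤ j) → 0`, also `G(y) → Υ_r` uniformly in `r`. Finally `λ ≥ 0` and `(e^λ)' = 1 + λ ≥ 1`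
force `λ(t) → ∞`.
-/

open Finset

section Solution

variable {lam : ℝ → ℝ}

lemma hasDerivAt_lam (hdiff : Differentiable ℝ lam)
    (hode : ∀ t : ℝ, 0 ≤ t → deriv lam t = Real.exp (-lam t) * (1 + lam t)) {t : ℝ}
    (ht : 0 ≤ t) : HasDerivAt lam (Real.exp (-lam t) * (1 + lam t)) t :=
  hode t ht ▸ (hdiff t).hasDerivAt

lemma lam_nonneg (hdiff : Differentiable ℝ lam) (h0 : lam 0 = 0)
    (hode : ∀ t : ℝ, 0 ≤ t → deriv lam t = Real.exp (-lam t) * (1 + lam t)) {t : ℝ}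
    (ht : 0 ≤ t) : 0 ≤ lam t := by
  have h := image_le_of_deriv_right_lt_deriv_boundary (f := fun s => -lam s) (a := 0) (b := t)
    (B := fun _ => 0) (B' := fun _ => 0) (hdiff.continuous.neg.continuousOn)
    (fun s hs => (hasDerivAt_lam hdiff hode hs.1).neg.hasDerivWithinAt) (by simp [h0])
    (fun _ => hasDerivAt_const _ _) (fun s _ hs => by simp [neg_eq_zero.1 hs])
  simpa using h ⟨ht, le_rfl⟩

lemma tendsto_lam_atTop (hdiff : Differentiable ℝ lam) (h0 : lam 0 = 0)
    (hode : ∀ t : ℝ, 0 ≤ t → deriv lam t = Real.exp (-lam t) * (1 + lam t)) :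
    Tendsto lam atTop atTop := by
  have hexp : ∀ t, 0 ≤ t → HasDerivAt (fun s => Real.exp (lam s)) (1 + lam t) t := fun t ht =>
    ((hasDerivAt_lam hdiff hode ht).exp).congr_deriv (by
      rw [← mul_assoc, ← Real.exp_add, add_neg_cancel, Real.exp_zero, one_mul])
  have hgrowth : ∀ t, 0 ≤ t → t ≤ Real.exp (lam t) - 1 := by
    intro t ht
    have := (convex_Ici (0 : ℝ)).mul_sub_le_image_sub_of_le_deriv (f := fun s => Real.exp (lam s))
      (C := 1) (hdiff.continuous.continuousOn.rexp) ((hdiff.exp).differentiableOn)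
      (fun s hs => by
        rw [interior_Ici] at hs
        rw [(hexp s hs.le).deriv]
        linarith [lam_nonneg hdiff h0 hode hs.le]) 0 Set.self_mem_Ici t ht ht
    simpa [h0] using this
  rw [← Real.tendsto_exp_comp_atTop]
  refine tendsto_atTop_mono' atTop ?_ (tendsto_atTop_add_const_right atTop 1 tendsto_id)
  filter_upwards [eventually_ge_atTop 0] with t ht
  linarith [hgrowth t ht, show id t = t from rfl]

lemma hasDerivAt_deriv_lam (hdiff : Differentiable ℝ lam)
    (hode : ∀ t : ℝ, 0 ≤ t → deriv lam t = Real.exp (-lam t) * (1 + lam t)) {t : ℝ}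
    (ht : 0 < t) :
    HasDerivAt (deriv lam) (-(lam t * Real.exp (-lam t)) * deriv lam t) t := by
  have hl := hasDerivAt_lam hdiff hode ht.le
  have heq : (fun s => Real.exp (-lam s) * (1 + lam s)) =ᶠ[nhds t] deriv lam := by
    filter_upwards [Ioi_mem_nhds ht] with s hs
    exact (hode s (le_of_lt hs)).symm
  refine ((hl.neg.exp.mul (hl.const_add 1)).congr_of_eventuallyEq heq.symm).congr_deriv ?_
  simp only [Pi.neg_apply, hode t ht.le]
  ring

end Solution

section PoissonWeight

def poissonWeight (y : ℝ) (i : ℕ) : ℝ := Real.exp (-y) * y ^ i / i.factorial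

lemma poissonWeight_nonneg {y : ℝ} (hy : 0 ≤ y) (i : ℕ) : 0 ≤ poissonWeight y i := by
  unfold poissonWeight; positivity

lemma sum_poissonWeight_le_one {y : ℝ} (hy : 0 ≤ y) (n : ℕ) :
    ∑ i ∈ range n, poissonWeight y i ≤ 1 := by
  have h := mul_le_mul_of_nonneg_left (Real.sum_le_exp_of_nonneg hy n) (Real.exp_pos (-y)).le
  rw [mul_sum, ← Real.exp_add, neg_add_cancel, Real.exp_zero] at h
  simpa only [poissonWeight, mul_div_assoc] using h

lemma poissonWeight_le_one {y : ℝ} (hy : 0 ≤ y) (i : ℕ) : poissonWeight y i ≤ 1 :=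
  (single_le_sum (fun j _ => poissonWeight_nonneg hy j) (self_mem_range_succ i)).trans
    (sum_poissonWeight_le_one hy (i + 1))

lemma tendsto_poissonWeight_atTop (i : ℕ) :
    Tendsto (fun y => poissonWeight y i) atTop (nhds 0) := by
  simpa [poissonWeight, mul_comm] using
    (Real.tendsto_pow_mul_exp_neg_atTop_nhds_zero i).div_const (i.factorial : ℝ)

lemma hasDerivAt_poissonWeight_succ (y : ℝ) (i : ℕ) :
    HasDerivAt (fun y => poissonWeight y (i + 1))
      (poissonWeight y i - poissonWeight y (i + 1)) y := by
  have h := (((hasDerivAt_id y).neg.exp).mul (hasDerivAt_pow (i + 1) y)).div_const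
    ((i + 1).factorial : ℝ)
  refine h.congr_deriv ?_
  simp only [poissonWeight, Pi.neg_apply, id_eq, Nat.add_sub_cancel, Nat.factorial_succ,
    Nat.cast_mul, Nat.cast_succ]
  field_simp
  ring

lemma hasDerivAt_sum_poissonWeight (y : ℝ) (m : ℕ) :
    HasDerivAt (fun y => ∑ i ∈ range (m + 1), poissonWeight y i) (-poissonWeight y m) y := by
  induction m with
  | zero =>
    simpa [poissonWeight] using (hasDerivAt_id y).neg.exp
  | succ m ih =>
    simp only [sum_range_succ _ (m + 1)]
    exact (ih.add (hasDerivAt_poissonWeight_succ y m)).congr_deriv (by ring)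

end PoissonWeight

section Profile

variable {Δ : ℕ} {r : ℕ → ℝ}

def tailPoly (Δ : ℕ) (r : ℕ → ℝ) (x : ℝ) : ℝ :=
  ∑ k ∈ Icc 2 (Δ - 1), x ^ k / (Nat.factorial k : ℝ) * tailS Δ r (k + 1)

def shiftPoly (Δ : ℕ) (r : ℕ → ℝ) (x : ℝ) : ℝ :=
  ∑ k ∈ range (Δ - 1), x ^ k / (Nat.factorial k : ℝ) * r (k + 2)

def lamIntegrand (Δ : ℕ) (r : ℕ → ℝ) (x : ℝ) : ℝ := Real.exp x / (1 + x) ^ 2 * tailPoly Δ r x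

def lamIntegral (Δ : ℕ) (r : ℕ → ℝ) (y : ℝ) : ℝ := ∫ x in (0 : ℝ)..y, lamIntegrand Δ r x

def betaCoeff (Δ : ℕ) (r : ℕ → ℝ) (j : ℕ) : ℝ := j * (j - 1) * r j - tailS Δ r (j + 1)

def lamWeight (y : ℝ) : ℝ := Real.exp (-y) ^ 2 * (y ^ 3 + 2 * y ^ 2 + 2 * y + 1)

def betaProfile (Δ : ℕ) (r : ℕ → ℝ) (y : ℝ) : ℝ :=
  ∑ j ∈ Icc 2 Δ, betaCoeff Δ r j * (1 - ∑ i ∈ range (j + 1), poissonWeight y i) +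
    lamWeight y * lamIntegral Δ r y

def betaProfileDeriv (Δ : ℕ) (r : ℕ → ℝ) (y : ℝ) : ℝ :=
  Real.exp (-y) * (y ^ 2 * shiftPoly Δ r y - tailPoly Δ r y) -
    Real.exp (-y) ^ 2 * (1 + 2 * y) * y ^ 2 * lamIntegral Δ r y + lamWeight y * lamIntegrand Δ r y

lemma continuous_tailPoly : Continuous (tailPoly Δ r) := by
  unfold tailPoly; fun_prop

lemma continuous_shiftPoly : Continuous (shiftPoly Δ r) := by
  unfold shiftPoly; fun_prop

lemma continuousOn_lamIntegrand : ContinuousOn (lamIntegrand Δ r) (Set.Ioi (-1)) := by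
  intro x hx
  have hx : (1 + x) ^ 2 ≠ 0 := by
    have : (0 : ℝ) < 1 + x := by linarith [Set.mem_Ioi.1 hx]
    positivity
  exact ((Real.continuous_exp.continuousAt.div
    ((continuous_const.add continuous_id).pow 2).continuousAt hx).mul
    continuous_tailPoly.continuousAt).continuousWithinAt

lemma intervalIntegrable_lamIntegrand {y : ℝ} (hy : -1 < y) :
    IntervalIntegrable (lamIntegrand Δ r) volume 0 y :=
  (continuousOn_lamIntegrand.mono fun x hx => by
    rcases Set.mem_uIcc.1 hx with h | h <;> simp only [Set.mem_Ioi] <;> linarith [h.1, h.2]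
  ).intervalIntegrable

lemma hasDerivAt_lamIntegral {y : ℝ} (hy : -1 < y) :
    HasDerivAt (lamIntegral Δ r) (lamIntegrand Δ r y) y :=
  intervalIntegral.integral_hasDerivAt_right (intervalIntegrable_lamIntegrand hy)
    (continuousOn_lamIntegrand.stronglyMeasurableAtFilter isOpen_Ioi _ hy)
    (continuousOn_lamIntegrand.continuousAt (Ioi_mem_nhds hy))

lemma hasDerivAt_lamWeight (y : ℝ) :
    HasDerivAt lamWeight (-(Real.exp (-y) ^ 2 * (1 + 2 * y) * y ^ 2)) y := by
  have h := (((hasDerivAt_id y).neg.exp).pow 2).mul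
    ((((hasDerivAt_pow 3 y).add ((hasDerivAt_pow 2 y).const_mul 2)).add
      ((hasDerivAt_id y).const_mul 2)).add_const 1)
  exact h.congr_deriv (by simp only [Pi.add_apply, Pi.pow_apply, Pi.neg_apply, id_eq]; ring)

lemma tailS_of_lt {k : ℕ} (hk : Δ < k) : tailS Δ r k = 0 := by
  simp [tailS, Icc_eq_empty_of_lt hk]

lemma sum_betaCoeff_mul_pow (y : ℝ) :
    ∑ j ∈ Icc 2 Δ, betaCoeff Δ r j * (y ^ j / j.factorial) =
      y ^ 2 * shiftPoly Δ r y - tailPoly Δ r y := by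
  simp only [betaCoeff, sub_mul, sum_sub_distrib]
  congr 1
  · rw [shiftPoly, mul_sum]
    refine sum_nbij' (fun j => j - 2) (fun k => k + 2) (fun j hj => ?_) (fun k hk => ?_)
      (fun j hj => ?_) (fun k _ => rfl) (fun j hj => ?_) <;>
      simp only [mem_Icc, mem_range] at * <;>
      try omega
    obtain ⟨k, rfl⟩ : ∃ k, j = k + 2 := ⟨j - 2, by omega⟩
    simp only [Nat.add_sub_cancel, Nat.factorial_succ, Nat.cast_mul, Nat.cast_succ, pow_add]
    field_simp
    ring
  · rw [tailPoly]
    refine (sum_subset (fun k hk => ?_) (fun j hj hj' => ?_)).symm.trans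
      (sum_congr rfl fun k _ => by ring)
    · simp only [mem_Icc] at hk ⊢; omega
    · simp only [mem_Icc] at hj hj'
      rw [tailS_of_lt (by omega), zero_mul]

lemma hasDerivAt_betaProfile {y : ℝ} (hy : -1 < y) :
    HasDerivAt (betaProfile Δ r) (betaProfileDeriv Δ r y) y := by
  have hsum : HasDerivAt (fun y => ∑ j ∈ Icc 2 Δ,
      betaCoeff Δ r j * (1 - ∑ i ∈ range (j + 1), poissonWeight y i))
      (Real.exp (-y) * (y ^ 2 * shiftPoly Δ r y - tailPoly Δ r y)) y := by
    rw [← sum_betaCoeff_mul_pow, mul_sum]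
    refine HasDerivAt.fun_sum fun j _ => ?_
    refine (((hasDerivAt_sum_poissonWeight y j).const_sub 1).const_mul _).congr_deriv ?_
    rw [neg_neg, poissonWeight]
    ring
  exact (hsum.add ((hasDerivAt_lamWeight y).mul (hasDerivAt_lamIntegral hy))).congr_deriv
    (by simp only [betaProfileDeriv]; ring)

lemma continuousOn_betaProfileDeriv : ContinuousOn (betaProfileDeriv Δ r) (Set.Ioi (-1)) := by
  have hF : ContinuousOn (lamIntegral Δ r) (Set.Ioi (-1)) := fun y hy =>
    (hasDerivAt_lamIntegral hy).continuousAt.continuousWithinAt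
  have hI := continuousOn_lamIntegrand (Δ := Δ) (r := r)
  have hp := continuous_tailPoly (Δ := Δ) (r := r)
  have hq := continuous_shiftPoly (Δ := Δ) (r := r)
  unfold betaProfileDeriv lamWeight
  fun_prop

lemma betaProfile_zero : betaProfile Δ r 0 = 0 := by
  simp [betaProfile, lamIntegral, sum_range_succ', poissonWeight]

end Profile

section Bridge

variable {Δ : ℕ} {r : ℕ → ℝ} {lam : ℝ → ℝ}

lemma hasDerivAt_LamErr (hdiff : Differentiable ℝ lam) (h0 : lam 0 = 0)
    (hode : ∀ t : ℝ, 0 ≤ t → deriv lam t = Real.exp (-lam t) * (1 + lam t)) {t : ℝ}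
    (ht : 0 < t) :
    HasDerivAt (LamErr lam Δ r)
      (-(lam t * Real.exp (-lam t)) * deriv lam t * lamIntegral Δ r (lam t) +
        deriv lam t * (lamIntegrand Δ r (lam t) * deriv lam t)) t := by
  have hy : -1 < lam t := by linarith [lam_nonneg hdiff h0 hode ht.le]
  exact (hasDerivAt_deriv_lam hdiff hode ht).mul
    ((hasDerivAt_lamIntegral hy).comp t (hdiff t).hasDerivAt)

lemma Herr_mul_sq_eq (hdiff : Differentiable ℝ lam) (h0 : lam 0 = 0)
    (hode : ∀ t : ℝ, 0 ≤ t → deriv lam t = Real.exp (-lam t) * (1 + lam t)) {t : ℝ}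
    (ht : 0 < t) :
    Herr lam Δ r t * lam t ^ 2 =
      betaProfileDeriv Δ r (lam t) * (Real.exp (-lam t) * (1 + lam t)) := by
  have h1 : 0 < 1 + lam t := by linarith [lam_nonneg hdiff h0 hode ht.le]
  have hL : LamErr lam Δ r t = deriv lam t * lamIntegral Δ r (lam t) := rfl
  rw [Herr, (hasDerivAt_LamErr hdiff h0 hode ht).deriv, hL, hode t ht.le]
  simp only [betaProfileDeriv, lamWeight, lamIntegrand, shiftPoly, Real.exp_neg]
  field_simp
  ring

lemma betaAux_eq_betaProfile (hdiff : Differentiable ℝ lam) (h0 : lam 0 = 0)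
    (hode : ∀ t : ℝ, 0 ≤ t → deriv lam t = Real.exp (-lam t) * (1 + lam t)) {t : ℝ}
    (ht : 0 ≤ t) : betaAux lam Δ r t = betaProfile Δ r (lam t) := by
  have hlam : ∀ s ∈ Set.uIcc 0 t, -1 < lam s := fun s hs => by
    rw [Set.uIcc_of_le ht] at hs
    linarith [lam_nonneg hdiff h0 hode hs.1]
  have hderiv : ∀ s ∈ Set.uIcc 0 t, HasDerivAt (fun s => betaProfile Δ r (lam s))
      (betaProfileDeriv Δ r (lam s) * (Real.exp (-lam s) * (1 + lam s))) s := fun s hs =>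
    (hasDerivAt_betaProfile (hlam s hs)).comp s
      (hasDerivAt_lam hdiff hode (Set.uIcc_of_le ht ▸ hs).1)
  have hcont : ContinuousOn
      (fun s => betaProfileDeriv Δ r (lam s) * (Real.exp (-lam s) * (1 + lam s)))
      (Set.uIcc 0 t) :=
    have := hdiff.continuous
    (continuousOn_betaProfileDeriv.comp this.continuousOn hlam).mul
      (by fun_prop : Continuous fun s => Real.exp (-lam s) * (1 + lam s)).continuousOn
  calc betaAux lam Δ r t
      = ∫ s in (0 : ℝ)..t, betaProfileDeriv Δ r (lam s) * (Real.exp (-lam s) * (1 + lam s)) :=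
        intervalIntegral.integral_congr_ae (ae_of_all _ fun s hs =>
          Herr_mul_sq_eq hdiff h0 hode (Set.uIoc_of_le ht ▸ hs).1)
    _ = betaProfile Δ r (lam t) := by
        rw [intervalIntegral.integral_eq_sub_of_hasDerivAt hderiv hcont.intervalIntegrable, h0,
          betaProfile_zero, sub_zero]

end Bridge

section Coefficients

variable {Δ : ℕ} {r : ℕ → ℝ}

lemma memR.nonneg (hr : memR Δ r) {j : ℕ} (h3 : 3 ≤ j) (hj : j ≤ Δ) : 0 ≤ r j :=
  hr.2.1 j h3 hj

lemma memR.tailS_nonneg (hr : memR Δ r) {m : ℕ} (hm : 3 ≤ m) : 0 ≤ tailS Δ r m :=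
  sum_nonneg fun _ hd => hr.nonneg (hm.trans (mem_Icc.1 hd).1) (mem_Icc.1 hd).2

lemma memR.tailS_le_one (hr : memR Δ r) {m : ℕ} (hm : 3 ≤ m) : tailS Δ r m ≤ 1 :=
  hr.2.2.2 ▸ sum_le_sum_of_subset_of_nonneg
    (fun d hd => by simp only [mem_Icc] at hd ⊢; omega)
    (fun _ hd _ => hr.nonneg (mem_Icc.1 hd).1 (mem_Icc.1 hd).2)

lemma memR.abs_le_one (hr : memR Δ r) {j : ℕ} (hj : 2 ≤ j) : |r j| ≤ 1 := by
  rcases hj.eq_or_lt with rfl | h3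
  · simp [hr.1]
  rcases le_or_gt j Δ with hjΔ | hΔj
  · rw [abs_of_nonneg (hr.nonneg h3 hjΔ), ← hr.2.2.2]
    exact single_le_sum (fun k hk => hr.nonneg (mem_Icc.1 hk).1 (mem_Icc.1 hk).2)
      (mem_Icc.2 ⟨h3, hjΔ⟩)
  · simp [hr.2.2.1 j hΔj]

lemma sum_tailS_succ (a : ℕ) :
    ∑ j ∈ Icc a Δ, tailS Δ r (j + 1) = ∑ d ∈ Icc (a + 1) Δ, ((d : ℝ) - a) * r d := by
  rw [show ∑ j ∈ Icc a Δ, tailS Δ r (j + 1) = ∑ d ∈ Icc (a + 1) Δ, ∑ _j ∈ Icc a (d - 1), r d from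
    sum_comm' fun j d => by simp only [mem_Icc]; omega]
  refine sum_congr rfl fun d hd => ?_
  simp only [mem_Icc] at hd
  rw [sum_const, Nat.card_Icc, Nat.sub_add_cancel (by omega), nsmul_eq_mul,
    Nat.cast_sub (by omega)]

lemma sum_betaCoeff (hr : memR Δ r) : ∑ j ∈ Icc 2 Δ, betaCoeff Δ r j = Upsilon Δ r := by
  have h2 : 2 ≤ Δ := by
    by_contra h
    have := hr.2.2.2
    rw [Icc_eq_empty (by omega), sum_empty] at this
    norm_num at this
  simp only [betaCoeff, sum_sub_distrib, sum_tailS_succ]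
  rw [← insert_Icc_add_one_left_eq_Icc h2, sum_insert (by simp), hr.1, Upsilon, add_sub_assoc,
    ← sum_sub_distrib]
  have hsum : ∑ j ∈ Icc 3 Δ, ((j : ℝ) * (j - 1) * r j - ((j : ℝ) - (2 : ℕ)) * r j) =
      ∑ k ∈ Icc 3 Δ, (k : ℝ) * (k - 2) * r k + 2 * ∑ k ∈ Icc 3 Δ, r k := by
    rw [mul_sum, ← sum_add_distrib]
    exact sum_congr rfl fun j _ => by push_cast; ring
  rw [show (2 + 1 : ℕ) = 3 from rfl, hsum, hr.2.2.2]
  norm_num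

lemma abs_betaCoeff_le (hr : memR Δ r) {j : ℕ} (hj : j ∈ Icc 2 Δ) :
    |betaCoeff Δ r j| ≤ (Δ : ℝ) ^ 2 := by
  obtain ⟨h2, hjΔ⟩ := mem_Icc.1 hj
  have hj' : (2 : ℝ) ≤ j := by exact_mod_cast h2
  have hjΔ' : (j : ℝ) ≤ Δ := by exact_mod_cast hjΔ
  have hr1 := abs_le.1 (hr.abs_le_one h2)
  have hs0 := hr.tailS_nonneg (m := j + 1) (by omega)
  have hs1 := hr.tailS_le_one (m := j + 1) (by omega)
  have hjj : 0 ≤ (j : ℝ) * (j - 1) := by nlinarith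
  rw [betaCoeff, abs_le]
  constructor <;> nlinarith

end Coefficients

lemma sum_Icc_le_mul {a n N : ℕ} (ha : 1 ≤ a) (hn : n ≤ N) {f : ℕ → ℝ} {c : ℝ} (hc : 0 ≤ c)
    (h : ∀ j ∈ Icc a n, f j ≤ c) : ∑ j ∈ Icc a n, f j ≤ N * c := by
  refine (sum_le_card_nsmul _ _ _ h).trans ?_
  rw [Nat.card_Icc, nsmul_eq_mul]
  exact mul_le_mul_of_nonneg_right (by exact_mod_cast (by omega : n + 1 - a ≤ N)) hc

section Remainder

variable {Δ : ℕ} {r : ℕ → ℝ}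

lemma memR.tailPoly_nonneg (hr : memR Δ r) {x : ℝ} (hx : 0 ≤ x) : 0 ≤ tailPoly Δ r x :=
  sum_nonneg fun k hk => mul_nonneg (by positivity)
    (hr.tailS_nonneg (by simp only [mem_Icc] at hk; omega))

lemma memR.lamIntegrand_nonneg (hr : memR Δ r) {x : ℝ} (hx : 0 ≤ x) :
    0 ≤ lamIntegrand Δ r x :=
  mul_nonneg (by positivity) (hr.tailPoly_nonneg hx)

lemma memR.monotoneOn_lamIntegrand (hr : memR Δ r) :
    MonotoneOn (lamIntegrand Δ r) (Set.Ici 0) := by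
  have hsplit : ∀ z : ℝ, 0 ≤ z → lamIntegrand Δ r z = ∑ k ∈ Icc 2 (Δ - 1),
      tailS Δ r (k + 1) / k.factorial * (Real.exp z * z ^ (k - 2) * (z / (1 + z)) ^ 2) := by
    intro z hz
    rw [lamIntegrand, tailPoly, mul_sum]
    refine sum_congr rfl fun k hk => ?_
    obtain ⟨m, rfl⟩ : ∃ m, k = m + 2 := ⟨k - 2, by simp only [mem_Icc] at hk; omega⟩
    rw [Nat.add_sub_cancel]
    field_simp
    ring
  intro x (hx : 0 ≤ x) y (hy : 0 ≤ y) hxy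
  rw [hsplit x hx, hsplit y hy]
  refine sum_le_sum fun k hk => mul_le_mul_of_nonneg_left ?_
    (div_nonneg (hr.tailS_nonneg (by simp only [mem_Icc] at hk; omega)) (by positivity))
  have hfrac : x / (1 + x) ≤ y / (1 + y) := by
    rw [div_le_div_iff₀ (by positivity) (by positivity)]
    nlinarith
  gcongr

lemma memR.lamIntegral_nonneg (hr : memR Δ r) {y : ℝ} (hy : 0 ≤ y) : 0 ≤ lamIntegral Δ r y :=
  intervalIntegral.integral_nonneg hy fun _ hx => hr.lamIntegrand_nonneg hx.1

lemma memR.lamIntegral_le (hr : memR Δ r) {y : ℝ} (hy : 0 ≤ y) :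
    lamIntegral Δ r y ≤ y * lamIntegrand Δ r y := by
  calc lamIntegral Δ r y ≤ ∫ _ in (0 : ℝ)..y, lamIntegrand Δ r y :=
        intervalIntegral.integral_mono_on hy (intervalIntegrable_lamIntegrand (by linarith))
          intervalIntegrable_const fun x hx => hr.monotoneOn_lamIntegrand hx.1 hy hx.2
    _ = y * lamIntegrand Δ r y := by simp

lemma memR.lamWeight_mul_lamIntegral_le (hr : memR Δ r) {y : ℝ} (hy : 0 ≤ y) :
    lamWeight y * lamIntegral Δ r y ≤ Real.exp (-y) * y * (1 + y) * tailPoly Δ r y := by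
  have hp := hr.tailPoly_nonneg hy
  calc lamWeight y * lamIntegral Δ r y ≤ lamWeight y * (y * lamIntegrand Δ r y) :=
        mul_le_mul_of_nonneg_left (hr.lamIntegral_le hy) (by unfold lamWeight; positivity)
    _ = Real.exp (-y) * y * tailPoly Δ r y * ((y ^ 3 + 2 * y ^ 2 + 2 * y + 1) / (1 + y) ^ 2) := by
        rw [lamWeight, lamIntegrand, Real.exp_neg]
        field_simp
    _ ≤ Real.exp (-y) * y * tailPoly Δ r y * (1 + y) := by
        gcongr
        rw [div_le_iff₀ (by positivity)]
        nlinarith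
    _ = Real.exp (-y) * y * (1 + y) * tailPoly Δ r y := by ring

lemma memR.lamWeight_mul_lamIntegral_nonneg (hr : memR Δ r) {y : ℝ} (hy : 0 ≤ y) :
    0 ≤ lamWeight y * lamIntegral Δ r y :=
  mul_nonneg (by unfold lamWeight; positivity) (hr.lamIntegral_nonneg hy)

def lamRemainderBound (Δ : ℕ) (y : ℝ) : ℝ :=
  ∑ k ∈ Icc 2 (Δ - 1), (((k : ℝ) + 1) * poissonWeight y (k + 1) +
    ((k : ℝ) + 1) * ((k : ℝ) + 2) * poissonWeight y (k + 2))

lemma exp_neg_mul_mul_pow_div_factorial (y : ℝ) (k : ℕ) :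
    Real.exp (-y) * y * (1 + y) * (y ^ k / k.factorial) =
      ((k : ℝ) + 1) * poissonWeight y (k + 1) +
        ((k : ℝ) + 1) * ((k : ℝ) + 2) * poissonWeight y (k + 2) := by
  simp only [poissonWeight, Nat.factorial_succ, Nat.cast_mul, Nat.cast_succ]
  field_simp
  ring

lemma memR.exp_neg_mul_tailPoly_le_lamRemainderBound (hr : memR Δ r) {y : ℝ} (hy : 0 ≤ y) :
    Real.exp (-y) * y * (1 + y) * tailPoly Δ r y ≤ lamRemainderBound Δ y := by
  rw [tailPoly, mul_sum]
  refine sum_le_sum fun k hk => ?_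
  have hk3 : 3 ≤ k + 1 := by simp only [mem_Icc] at hk; omega
  rw [← mul_assoc, mul_comm _ (tailS Δ r (k + 1)), exp_neg_mul_mul_pow_div_factorial]
  refine mul_le_of_le_one_left ?_ (hr.tailS_le_one hk3)
  have := poissonWeight_nonneg hy (k + 1)
  have := poissonWeight_nonneg hy (k + 2)
  positivity

lemma lamRemainderBound_le {y : ℝ} (hy : 0 ≤ y) :
    lamRemainderBound Δ y ≤ Δ * (Δ * (Δ + 2)) := by
  refine sum_Icc_le_mul (by norm_num) (Nat.sub_le Δ 1) (by positivity) fun k hk => ?_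
  have hk : (k : ℝ) + 1 ≤ Δ := by
    exact_mod_cast (by simp only [mem_Icc] at hk; omega : k + 1 ≤ Δ)
  have h1 := poissonWeight_le_one hy (k + 1)
  have h2 := poissonWeight_le_one hy (k + 2)
  have h1' := poissonWeight_nonneg hy (k + 1)
  have h2' := poissonWeight_nonneg hy (k + 2)
  have hk0 : (0 : ℝ) ≤ k := k.cast_nonneg
  nlinarith [mul_le_mul_of_nonneg_left h2 (by positivity : (0 : ℝ) ≤ ((k : ℝ) + 1) * (k + 2))]

lemma tendsto_lamRemainderBound : Tendsto (lamRemainderBound Δ) atTop (nhds 0) := by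
  have h := tendsto_finsetSum (Icc 2 (Δ - 1)) fun k _ =>
    ((tendsto_poissonWeight_atTop (k + 1)).const_mul ((k : ℝ) + 1)).add
      ((tendsto_poissonWeight_atTop (k + 2)).const_mul (((k : ℝ) + 1) * ((k : ℝ) + 2)))
  simp only [mul_zero, add_zero, sum_const_zero] at h
  exact h

end Remainder

section Bounds

variable {Δ : ℕ} {r : ℕ → ℝ}

def betaErrorBound (Δ : ℕ) (y : ℝ) : ℝ :=
  (Δ : ℝ) ^ 2 * ∑ j ∈ Icc 2 Δ, ∑ i ∈ range (j + 1), poissonWeight y i + lamRemainderBound Δ y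

lemma memR.abs_betaProfile_le (hr : memR Δ r) {y : ℝ} (hy : 0 ≤ y) :
    |betaProfile Δ r y| ≤ 2 * (Δ : ℝ) ^ 2 * ((Δ : ℝ) + 1) := by
  have hcoeff : |∑ j ∈ Icc 2 Δ, betaCoeff Δ r j * (1 - ∑ i ∈ range (j + 1), poissonWeight y i)|
      ≤ Δ * (Δ : ℝ) ^ 2 := by
    refine (abs_sum_le_sum_abs _ _).trans
      (sum_Icc_le_mul (by norm_num) le_rfl (by positivity) fun j hj => ?_)
    have h0 := sum_nonneg fun i (_ : i ∈ range (j + 1)) => poissonWeight_nonneg hy i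
    have h1 := sum_poissonWeight_le_one hy (j + 1)
    rw [abs_mul, abs_of_nonneg (by linarith : 0 ≤ 1 - ∑ i ∈ range (j + 1), poissonWeight y i)]
    exact mul_le_of_le_one_right (abs_nonneg _) (by linarith) |>.trans (abs_betaCoeff_le hr hj)
  have hrem : lamWeight y * lamIntegral Δ r y ≤ Δ * (Δ * (Δ + 2)) :=
    ((hr.lamWeight_mul_lamIntegral_le hy).trans (hr.exp_neg_mul_tailPoly_le_lamRemainderBound hy)).trans
      (lamRemainderBound_le hy)
  have hrem0 := hr.lamWeight_mul_lamIntegral_nonneg hy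
  rw [betaProfile]
  calc _ ≤ Δ * (Δ : ℝ) ^ 2 + Δ * (Δ * (Δ + 2)) :=
        (abs_add_le _ _).trans (add_le_add hcoeff ((abs_of_nonneg hrem0).trans_le hrem))
    _ = 2 * (Δ : ℝ) ^ 2 * ((Δ : ℝ) + 1) := by ring

lemma memR.abs_betaProfile_sub_upsilon_le (hr : memR Δ r) {y : ℝ} (hy : 0 ≤ y) :
    |betaProfile Δ r y - Upsilon Δ r| ≤ betaErrorBound Δ y := by
  have hcoeff : |∑ j ∈ Icc 2 Δ, betaCoeff Δ r j * ∑ i ∈ range (j + 1), poissonWeight y i|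
      ≤ (Δ : ℝ) ^ 2 * ∑ j ∈ Icc 2 Δ, ∑ i ∈ range (j + 1), poissonWeight y i := by
    rw [mul_sum]
    refine (abs_sum_le_sum_abs _ _).trans (sum_le_sum fun j hj => ?_)
    rw [abs_mul, abs_of_nonneg (sum_nonneg fun i _ => poissonWeight_nonneg hy i)]
    exact mul_le_mul_of_nonneg_right (abs_betaCoeff_le hr hj)
      (sum_nonneg fun i _ => poissonWeight_nonneg hy i)
  have hrem := (hr.lamWeight_mul_lamIntegral_le hy).trans (hr.exp_neg_mul_tailPoly_le_lamRemainderBound hy)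
  have hrem0 := hr.lamWeight_mul_lamIntegral_nonneg hy
  have hdiff : betaProfile Δ r y - Upsilon Δ r = lamWeight y * lamIntegral Δ r y -
      ∑ j ∈ Icc 2 Δ, betaCoeff Δ r j * ∑ i ∈ range (j + 1), poissonWeight y i := by
    rw [betaProfile, ← sum_betaCoeff hr]
    simp only [mul_sub, mul_one, sum_sub_distrib]
    ring
  rw [hdiff, betaErrorBound]
  refine (abs_sub _ _).trans ?_
  rw [abs_of_nonneg hrem0]
  linarith

lemma tendsto_betaErrorBound : Tendsto (betaErrorBound Δ) atTop (nhds 0) := by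
  have h := ((tendsto_finsetSum (Icc 2 Δ) fun j _ => tendsto_finsetSum (range (j + 1))
    fun i _ => tendsto_poissonWeight_atTop i).const_mul ((Δ : ℝ) ^ 2)).add
    (tendsto_lamRemainderBound (Δ := Δ))
  simp only [sum_const_zero, mul_zero, add_zero] at h
  exact h

end Bounds

theorem beta_bound_and_limit_general (Δ : ℕ) (lam : ℝ → ℝ)
    (hdiff : Differentiable ℝ lam) (h0 : lam 0 = 0)
    (hode : ∀ t : ℝ, 0 ≤ t → deriv lam t = Real.exp (-lam t) * (1 + lam t)) :
    (∀ r : ℕ → ℝ, memR Δ r → ∀ t : ℝ, 0 ≤ t →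
      |betaAux lam Δ r t| ≤ 2 * (Δ : ℝ) ^ 2 * ((Δ : ℝ) + 1)) ∧
    (∀ η : ℝ, 0 < η → ∃ T : ℝ, 0 < T ∧ ∀ t : ℝ, T ≤ t → ∀ r : ℕ → ℝ, memR Δ r →
      |betaAux lam Δ r t - Upsilon Δ r| ≤ η) := by
  refine ⟨fun r hr t ht => ?_, fun η hη => ?_⟩
  · rw [betaAux_eq_betaProfile hdiff h0 hode ht]
    exact hr.abs_betaProfile_le (lam_nonneg hdiff h0 hode ht)
  · obtain ⟨T, hT⟩ := eventually_atTop.1 ((tendsto_betaErrorBound.comp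
      (tendsto_lam_atTop hdiff h0 hode)).eventually (ge_mem_nhds hη))
    refine ⟨max T 1, by positivity, fun t ht r hr => ?_⟩
    have ht0 : 0 ≤ t := by linarith [le_max_right T 1]
    rw [betaAux_eq_betaProfile hdiff h0 hode ht0]
    exact (hr.abs_betaProfile_sub_upsilon_le (lam_nonneg hdiff h0 hode ht0)).trans
      (hT t (le_of_max_le_left ht))

/-- Bound and uniform limit for `β_r`: `|β_r(t)| ≤ 2Δ²(Δ+1)` and
`β_r(t) → Υ_r` as `t → ∞` uniformly in `r ∈ R_Δ`. -/
theorem beta_bound_and_limit (Δ : ℕ) (hΔ : 3 ≤ Δ) (lam : ℝ → ℝ)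
    (hdiff : Differentiable ℝ lam) (h0 : lam 0 = 0)
    (hode : ∀ t : ℝ, 0 ≤ t → deriv lam t = Real.exp (-lam t) * (1 + lam t)) :
    (∀ r : ℕ → ℝ, memR Δ r → ∀ t : ℝ, 0 ≤ t →
      |betaAux lam Δ r t| ≤ 2 * (Δ : ℝ) ^ 2 * ((Δ : ℝ) + 1)) ∧
    (∀ η : ℝ, 0 < η → ∃ T : ℝ, 0 < T ∧ ∀ t : ℝ, T ≤ t → ∀ r : ℕ → ℝ, memR Δ r →
      |betaAux lam Δ r t - Upsilon Δ r| ≤ η) :=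
  beta_bound_and_limit_general Δ lam hdiff h0 hode
end
end

section
/- Asymptotic behavior of λ and u (Claim 'Asymptotic behavior of frequently used functions', parts (a), (b), (e), (g), together with λ'(t) ~ 1/t): As t → ∞: λ(t)/log t → 1, e^{λ(t)}/(t·log t) → 1, t·λ'(t) → 1, −u(t)·(log t)/t → 1, and −u'(t)·log t → 1. -/
open Real MeasureTheory Filter

noncomputable section

/-!
Since `1 + λ = exp (∫₀^t e^{-λ})`, `λ > 0` for `t > 0`. Separating variables gives
`t = lamInv (λ t)` with `lamInv y = ∫₀^y eˣ / (1 + x) dx`, and comparing derivatives gives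
`lamInv y ~ e^y / y`; hence `e^λ ~ t λ` and, taking logarithms, `λ ~ log t`. The equation then
gives `t λ' = t e^{-λ} (1 + λ) → 1`. Splitting `(λ' - 1) / λ² = λ' / λ² - 1 / λ²` and integrating
the first term exactly, `u = C λ - λ K` for `t ≥ 1`, where `K = invSqIntegral λ` satisfies
`K ~ t / λ²`, again by comparing derivatives. So `u ~ -t / λ` and
`u' = C λ' - λ' K - 1 / λ ~ -1 / λ`.

Both comparisons are an `∞ / ∞` l'Hôpital rule for asymptotic equivalence: if `f' ~ g'`,
`g' ≥ 0` and `g → ∞`, then `f ~ g`.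
-/

open Asymptotics Set Topology

namespace Asymptotics

theorem IsLittleO.of_deriv_atTop {E : Type*} [NormedAddCommGroup E] [NormedSpace ℝ E]
    {f f' : ℝ → E} {g g' : ℝ → ℝ} (hf : ∀ᶠ x in atTop, HasDerivAt f (f' x) x)
    (hg : ∀ᶠ x in atTop, HasDerivAt g (g' x) x) (hg' : ∀ᶠ x in atTop, 0 ≤ g' x)
    (hg_top : Tendsto g atTop atTop) (h : f' =o[atTop] g') : f =o[atTop] g := by
  refine IsLittleO.of_bound fun c hc => ?_
  obtain ⟨b, hb⟩ := eventually_atTop.1 (hf.and (hg.and (hg'.and (h.bound (half_pos hc)))))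
  set B := fun x => ‖f b‖ + c / 2 * (g x - g b)
  have hB : ∀ y, b ≤ y → HasDerivAt B (c / 2 * g' y) y := fun y hy =>
    (((hb y hy).2.1.sub_const (g b)).const_mul (c / 2)).const_add _
  have hfB : ∀ x, b ≤ x → ‖f x‖ ≤ B x := fun x hx =>
    image_norm_le_of_norm_deriv_right_le_deriv_boundary' (a := b) (b := x)
      (fun y hy => (hb y hy.1).1.continuousAt.continuousWithinAt)
      (fun y hy => (hb y hy.1).1.hasDerivWithinAt) (by simp [B])
      (fun y hy => (hB y hy.1).continuousAt.continuousWithinAt)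
      (fun y hy => (hB y hy.1).hasDerivWithinAt)
      (fun y hy => by simpa [Real.norm_of_nonneg (hb y hy.1).2.2.1] using (hb y hy.1).2.2.2)
      (right_mem_Icc.2 hx)
  filter_upwards [eventually_ge_atTop b, hg_top.eventually_ge_atTop (2 * ‖f b‖ / c - g b),
    hg_top.eventually_ge_atTop 0] with x hbx hgx hg0
  rw [Real.norm_of_nonneg hg0]
  have hc_mul : c * (2 * ‖f b‖ / c - g b) = 2 * ‖f b‖ - c * g b := by field_simp
  calc ‖f x‖ ≤ ‖f b‖ + c / 2 * (g x - g b) := hfB x hbx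
    _ ≤ c * g x := by nlinarith [mul_le_mul_of_nonneg_left hgx hc.le]

theorem IsEquivalent.of_deriv_atTop {f f' g g' : ℝ → ℝ}
    (hf : ∀ᶠ x in atTop, HasDerivAt f (f' x) x) (hg : ∀ᶠ x in atTop, HasDerivAt g (g' x) x)
    (hg' : ∀ᶠ x in atTop, 0 ≤ g' x) (hg_top : Tendsto g atTop atTop) (h : f' ~[atTop] g') :
    f ~[atTop] g :=
  IsLittleO.of_deriv_atTop ((hf.and hg).mono fun _ h => h.1.sub h.2) hg hg' hg_top h

end Asymptotics

theorem abs_exp_neg_mul_one_add_sub_one_le {x : ℝ} (hx : -1 ≤ x) :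
    |exp (-x) * (1 + x) - 1| ≤ x ^ 2 := by
  have hlow : (1 - x) * (1 + x) ≤ exp (-x) * (1 + x) :=
    mul_le_mul_of_nonneg_right (by linarith [add_one_le_exp (-x)]) (by linarith)
  have hup : exp (-x) * (1 + x) ≤ 1 :=
    calc exp (-x) * (1 + x) ≤ exp (-x) * exp x := by gcongr; linarith [add_one_le_exp x]
      _ = 1 := by rw [← exp_add, neg_add_cancel, exp_zero]
  rw [abs_le]
  constructor <;> nlinarith

theorem tendsto_log_pow_div_atTop (n : ℕ) : Tendsto (fun x => log x ^ n / x) atTop (𝓝 0) := by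
  simpa using tendsto_pow_log_div_mul_add_atTop 1 0 n one_ne_zero

def lamInv (y : ℝ) : ℝ := ∫ x in (0 : ℝ)..y, exp x / (1 + x)

theorem continuousOn_exp_div_one_add : ContinuousOn (fun x => exp x / (1 + x)) (Ioi (-1)) :=
  continuousOn_exp.div (by fun_prop) fun x hx => by linarith [mem_Ioi.1 hx]

theorem hasDerivAt_lamInv {y : ℝ} (hy : -1 < y) : HasDerivAt lamInv (exp y / (1 + y)) y :=
  intervalIntegral.integral_hasDerivAt_right
    ((continuousOn_exp_div_one_add.mono
      (ordConnected_Ioi.uIcc_subset (by norm_num) hy)).intervalIntegrable)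
    (continuousOn_exp_div_one_add.stronglyMeasurableAtFilter isOpen_Ioi y hy)
    (continuousOn_exp_div_one_add.continuousAt (Ioi_mem_nhds hy))

theorem monotoneOn_lamInv : MonotoneOn lamInv (Ici 0) := by
  have hderiv : ∀ y ∈ Ici (0 : ℝ), HasDerivAt lamInv (exp y / (1 + y)) y :=
    fun y hy => hasDerivAt_lamInv (by linarith [mem_Ici.1 hy])
  refine monotoneOn_of_hasDerivWithinAt_nonneg (convex_Ici 0)
    (fun y hy => (hderiv y hy).continuousAt.continuousWithinAt)
    (fun y hy => (hderiv y (interior_subset hy)).hasDerivWithinAt) fun y hy => ?_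
  have : 0 ≤ y := interior_subset hy
  positivity

theorem isEquivalent_lamInv : lamInv ~[atTop] fun y => exp y / y := by
  have h_one_add : (fun y : ℝ => 1 + y) ~[atTop] id :=
    IsEquivalent.refl.const_add_of_norm_tendsto_atTop tendsto_norm_atTop_atTop
  have h_div : (fun y => exp y / (1 + y)) ~[atTop] fun y => exp y / y :=
    IsEquivalent.refl.div h_one_add
  have h_ratio : Tendsto (fun y : ℝ => y / (1 + y)) atTop (𝓝 1) :=
    (isEquivalent_iff_tendsto_one ((eventually_gt_atTop 0).mono fun y hy => by positivity)).1
      h_one_add.symm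
  refine (IsEquivalent.of_deriv_atTop (f' := fun y => exp y / (1 + y))
    (g' := fun y => exp y / (1 + y) * (y / (1 + y))) ?_ ?_ ?_ ?_ ?_).trans h_div
  · filter_upwards [eventually_gt_atTop (-1)] with y hy using hasDerivAt_lamInv hy
  · filter_upwards [eventually_gt_atTop (-1)] with y hy
    have hy' : 1 + y ≠ 0 := by linarith
    exact ((hasDerivAt_exp y).div ((hasDerivAt_id y).const_add 1) hy').congr_deriv
      (by simp only [id]; field_simp; ring)
  · filter_upwards [eventually_ge_atTop 0] with y hy
    positivity
  · exact h_div.symm.tendsto_atTop (by simpa using tendsto_exp_div_pow_atTop 1)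
  · exact (isEquivalent_iff_exists_eq_mul.2
      ⟨_, h_ratio, Eventually.of_forall fun y => mul_comm _ _⟩).symm

def invSqIntegral (lam : ℝ → ℝ) (t : ℝ) : ℝ := ∫ s in (1 : ℝ)..t, (lam s ^ 2)⁻¹

structure IsLambdaSolution (lam : ℝ → ℝ) : Prop where
  differentiable : Differentiable ℝ lam
  zero : lam 0 = 0
  deriv_eq : ∀ t, 0 ≤ t → deriv lam t = exp (-lam t) * (1 + lam t)

namespace IsLambdaSolution

variable {lam : ℝ → ℝ}

theorem continuous_exp_neg (hlam : IsLambdaSolution lam) : Continuous fun s => exp (-lam s) := by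
  have := hlam.differentiable.continuous
  fun_prop

theorem one_add_eq_exp_integral (hlam : IsLambdaSolution lam) {t : ℝ} (ht : 0 ≤ t) :
    1 + lam t = exp (∫ s in (0 : ℝ)..t, exp (-lam s)) := by
  set E := fun t => ∫ s in (0 : ℝ)..t, exp (-lam s)
  have hF : ∀ x, 0 ≤ x → HasDerivAt (fun t => (1 + lam t) * exp (-E t)) 0 x := by
    intro x hx
    have hE := (hlam.continuous_exp_neg.integral_hasStrictDerivAt 0 x).hasDerivAt
    refine (((hlam.differentiable x).hasDerivAt.const_add 1).mul hE.neg.exp).congr_deriv ?_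
    rw [hlam.deriv_eq x hx]
    ring
  have hconst := constant_of_has_deriv_right_zero (a := 0) (b := t)
    (fun x hx => (hF x hx.1).continuousAt.continuousWithinAt)
    (fun x hx => (hF x hx.1).hasDerivWithinAt) t (right_mem_Icc.2 ht)
  simp only [hlam.zero, E, intervalIntegral.integral_same, neg_zero, exp_zero, add_zero,
    mul_one] at hconst
  calc 1 + lam t = (1 + lam t) * exp (-E t) * exp (E t) := by
        rw [mul_assoc, ← exp_add, neg_add_cancel, exp_zero, mul_one]
    _ = exp (E t) := by rw [hconst, one_mul]

theorem pos (hlam : IsLambdaSolution lam) {t : ℝ} (ht : 0 < t) : 0 < lam t := by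
  have := intervalIntegral.intervalIntegral_pos_of_pos_on
    (hlam.continuous_exp_neg.intervalIntegrable 0 t) (fun s _ => exp_pos _) ht
  linarith [hlam.one_add_eq_exp_integral ht.le, one_lt_exp_iff.2 this]

theorem nonneg (hlam : IsLambdaSolution lam) {t : ℝ} (ht : 0 ≤ t) : 0 ≤ lam t := by
  rcases ht.eq_or_lt with rfl | ht
  · exact hlam.zero.ge
  · exact (hlam.pos ht).le

theorem lamInv_lam (hlam : IsLambdaSolution lam) {t : ℝ} (ht : 0 ≤ t) : lamInv (lam t) = t := by
  have hderiv : ∀ x, 0 ≤ x → HasDerivAt (lamInv ∘ lam) 1 x := by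
    intro x hx
    have hx' : 0 < 1 + lam x := by linarith [hlam.nonneg hx]
    refine ((hasDerivAt_lamInv (by linarith)).comp x
      (hlam.differentiable x).hasDerivAt).congr_deriv ?_
    rw [hlam.deriv_eq x hx]
    field_simp
    rw [← exp_add, add_neg_cancel, exp_zero]
  refine eq_of_has_deriv_right_eq (a := 0) (b := t) (f := lamInv ∘ lam) (g := id)
    (f' := fun _ => 1) (fun x hx => (hderiv x hx.1).hasDerivWithinAt)
    (fun x _ => (hasDerivAt_id x).hasDerivWithinAt)
    (fun x hx => (hderiv x hx.1).continuousAt.continuousWithinAt) continuous_id.continuousOn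
    ?_ t (right_mem_Icc.2 ht)
  simp [hlam.zero, lamInv]

theorem tendsto_atTop (hlam : IsLambdaSolution lam) : Tendsto lam atTop atTop := by
  refine Filter.tendsto_atTop.2 fun b => ?_
  filter_upwards [eventually_gt_atTop (lamInv (max b 0)), eventually_ge_atTop 0] with t hbt ht
  by_contra! hlt
  have := monotoneOn_lamInv (hlam.nonneg ht) (le_max_right b 0) (hlt.le.trans (le_max_left b 0))
  rw [hlam.lamInv_lam ht] at this
  linarith

theorem isEquivalent_exp (hlam : IsLambdaSolution lam) :
    (fun t => exp (lam t)) ~[atTop] fun t => t * lam t := by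
  have h := (isEquivalent_lamInv.comp_tendsto hlam.tendsto_atTop).congr_left
    ((eventually_ge_atTop 0).mono fun t ht => hlam.lamInv_lam ht)
  refine (h.mul (IsEquivalent.refl (u := lam))).symm.congr_left ?_
  filter_upwards [hlam.tendsto_atTop.eventually_gt_atTop 0] with t ht
  simp [div_mul_cancel₀ _ ht.ne']

theorem isEquivalent_log (hlam : IsLambdaSolution lam) : lam ~[atTop] log := by
  have htop := hlam.tendsto_atTop
  have h := (hlam.isEquivalent_exp.log (tendsto_id.atTop_mul_atTop₀ htop)).symm.congr_right
    (Eventually.of_forall fun t => log_exp (lam t))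
  have hlog_lam : (fun t => log (lam t)) =o[atTop] lam :=
    isLittleO_log_id_atTop.comp_tendsto htop
  refine (h.sub_isLittleO hlog_lam).congr_left ?_ |>.symm
  filter_upwards [eventually_gt_atTop 0] with t ht
  simp [log_mul ht.ne' (hlam.pos ht).ne']

theorem tendsto_div_log (hlam : IsLambdaSolution lam) :
    Tendsto (fun t => lam t / log t) atTop (𝓝 1) :=
  (isEquivalent_iff_tendsto_one ((eventually_gt_atTop 1).mono fun _ ht => (log_pos ht).ne')).1
    hlam.isEquivalent_log

theorem tendsto_exp_div_mul_log (hlam : IsLambdaSolution lam) :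
    Tendsto (fun t => exp (lam t) / (t * log t)) atTop (𝓝 1) :=
  (isEquivalent_iff_tendsto_one ((eventually_gt_atTop 1).mono fun t ht =>
    mul_ne_zero (by linarith) (log_pos ht).ne')).1
    (hlam.isEquivalent_exp.trans ((IsEquivalent.refl (u := id)).mul hlam.isEquivalent_log))

theorem tendsto_mul_deriv (hlam : IsLambdaSolution lam) :
    Tendsto (fun t => t * deriv lam t) atTop (𝓝 1) := by
  have h := (isEquivalent_iff_tendsto_one (Eventually.of_forall fun t => (exp_pos (lam t)).ne')).1
    hlam.isEquivalent_exp.symm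
  have := h.mul ((tendsto_const_nhds (x := (1 : ℝ))).add hlam.tendsto_atTop.inv_tendsto_atTop)
  rw [add_zero, mul_one] at this
  refine this.congr' ?_
  filter_upwards [eventually_gt_atTop 0] with t ht
  simp only [Pi.div_apply, Pi.inv_apply, hlam.deriv_eq t ht.le, exp_neg]
  field_simp [(hlam.pos ht).ne']
  ring

theorem tendsto_log_div (hlam : IsLambdaSolution lam) :
    Tendsto (fun t => log t / lam t) atTop (𝓝 1) :=
  (isEquivalent_iff_tendsto_one ((eventually_gt_atTop 0).mono fun _ ht => (hlam.pos ht).ne')).1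
    hlam.isEquivalent_log.symm

theorem continuousOn_deriv (hlam : IsLambdaSolution lam) : ContinuousOn (deriv lam) (Ici 0) :=
  ContinuousOn.congr (hlam.continuous_exp_neg.mul
    (continuous_const.add hlam.differentiable.continuous)).continuousOn
    fun t ht => hlam.deriv_eq t ht

theorem continuousOn_inv_sq (hlam : IsLambdaSolution lam) :
    ContinuousOn (fun s => (lam s ^ 2)⁻¹) (Ioi 0) :=
  (hlam.differentiable.continuous.pow 2).continuousOn.inv₀ fun _ hs =>
    pow_ne_zero 2 (hlam.pos hs).ne'

theorem hasDerivAt_invSqIntegral (hlam : IsLambdaSolution lam) {t : ℝ} (ht : 0 < t) :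
    HasDerivAt (invSqIntegral lam) (lam t ^ 2)⁻¹ t :=
  intervalIntegral.integral_hasDerivAt_right
    ((hlam.continuousOn_inv_sq.mono (ordConnected_Ioi.uIcc_subset one_pos ht)).intervalIntegrable)
    (hlam.continuousOn_inv_sq.stronglyMeasurableAtFilter isOpen_Ioi t ht)
    (hlam.continuousOn_inv_sq.continuousAt (Ioi_mem_nhds ht))

theorem intervalIntegrable_uAux_integrand (hlam : IsLambdaSolution lam) {t : ℝ} (ht : 0 ≤ t) :
    IntervalIntegrable (fun s => (deriv lam s - 1) / lam s ^ 2) volume 0 t := by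
  refine (intervalIntegrable_const (c := (1 : ℝ))).mono_fun'
    (((measurable_deriv lam).sub_const 1).div
      (hlam.differentiable.continuous.measurable.pow_const 2)).aestronglyMeasurable ?_
  rw [EventuallyLE, ae_restrict_iff' measurableSet_uIoc]
  refine ae_of_all _ fun s hs => ?_
  have hs0 : 0 < s := by rw [uIoc_of_le ht] at hs; exact hs.1
  have hlam_s := hlam.pos hs0
  rw [hlam.deriv_eq s hs0.le, norm_div, Real.norm_eq_abs, norm_pow, Real.norm_of_nonneg hlam_s.le,
    div_le_one (by positivity)]
  exact abs_exp_neg_mul_one_add_sub_one_le (by linarith)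

theorem exists_uAux_eq (hlam : IsLambdaSolution lam) :
    ∃ C, ∀ t, 1 ≤ t → uAux lam t = C * lam t - lam t * invSqIntegral lam t := by
  refine ⟨(∫ s in (0 : ℝ)..1, (deriv lam s - 1) / lam s ^ 2) + (lam 1)⁻¹, fun t ht => ?_⟩
  have ht0 : 0 < t := by linarith
  have hsub : uIcc 1 t ⊆ Ioi 0 := ordConnected_Ioi.uIcc_subset one_pos ht0
  have hderiv : ∀ s ∈ uIcc 1 t, HasDerivAt (fun s => -(lam s)⁻¹) (deriv lam s / lam s ^ 2) s :=
    fun s hs => ((hlam.differentiable s).hasDerivAt.inv (hlam.pos (hsub hs)).ne').neg.congr_deriv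
      (by ring)
  have hint_deriv : IntervalIntegrable (fun s => deriv lam s / lam s ^ 2) volume 1 t :=
    ContinuousOn.intervalIntegrable <|
      (hlam.continuousOn_deriv.mono (hsub.trans Ioi_subset_Ici_self)).div
        (hlam.differentiable.continuous.pow 2).continuousOn
        fun s hs => pow_ne_zero 2 (hlam.pos (hsub hs)).ne'
  have hint_inv : IntervalIntegrable (fun s => (lam s ^ 2)⁻¹) volume 1 t :=
    (hlam.continuousOn_inv_sq.mono hsub).intervalIntegrable
  have htail : ∫ s in (1 : ℝ)..t, (deriv lam s - 1) / lam s ^ 2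
      = ((lam 1)⁻¹ - (lam t)⁻¹) - invSqIntegral lam t := by
    simp_rw [sub_div, one_div]
    rw [intervalIntegral.integral_sub hint_deriv hint_inv,
      intervalIntegral.integral_eq_sub_of_hasDerivAt hderiv hint_deriv, invSqIntegral]
    ring
  have hint_01 := hlam.intervalIntegrable_uAux_integrand zero_le_one
  rw [uAux, ← intervalIntegral.integral_add_adjacent_intervals hint_01
    (hint_01.symm.trans (hlam.intervalIntegrable_uAux_integrand ht0.le)), htail]
  field_simp [(hlam.pos ht0).ne']
  ring

theorem tendsto_div_sq_atTop (hlam : IsLambdaSolution lam) :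
    Tendsto (fun t => t / lam t ^ 2) atTop atTop := by
  have h := (hlam.tendsto_div_log.pow 2).mul (tendsto_log_pow_div_atTop 2)
  rw [one_pow, one_mul] at h
  have h' : Tendsto (fun t => lam t ^ 2 / t) atTop (𝓝[>] 0) := by
    refine tendsto_nhdsWithin_iff.2 ⟨h.congr' ?_, ?_⟩
    · filter_upwards [eventually_gt_atTop 1] with t ht
      field_simp [(log_pos ht).ne']
    · filter_upwards [eventually_gt_atTop 0] with t ht
      have := hlam.pos ht
      exact mem_Ioi.2 (by positivity)
  simpa [Pi.inv_def] using h'.inv_tendsto_nhdsGT_zero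

theorem isEquivalent_invSqIntegral (hlam : IsLambdaSolution lam) :
    invSqIntegral lam ~[atTop] fun t => t / lam t ^ 2 := by
  have hsmall : Tendsto (fun t => 1 - 2 * (t * deriv lam t / lam t)) atTop (𝓝 1) := by
    simpa using ((hlam.tendsto_mul_deriv.div_atTop hlam.tendsto_atTop).const_mul 2).const_sub 1
  refine IsEquivalent.of_deriv_atTop (f' := fun t => (lam t ^ 2)⁻¹)
    (g' := fun t => (lam t ^ 2)⁻¹ * (1 - 2 * (t * deriv lam t / lam t))) ?_ ?_ ?_
    hlam.tendsto_div_sq_atTop ?_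
  · filter_upwards [eventually_gt_atTop 0] with t ht using hlam.hasDerivAt_invSqIntegral ht
  · filter_upwards [eventually_gt_atTop 0] with t ht
    have hlam_t := (hlam.pos ht).ne'
    refine ((hasDerivAt_id t).div ((hlam.differentiable t).hasDerivAt.pow 2)
      (pow_ne_zero 2 hlam_t)).congr_deriv ?_
    simp only [id, Pi.pow_apply]
    field_simp
    ring
  · filter_upwards [hsmall.eventually (eventually_ge_nhds zero_lt_one)] with t ht
    positivity
  · exact (isEquivalent_iff_exists_eq_mul.2
      ⟨_, hsmall, Eventually.of_forall fun t => mul_comm _ _⟩).symm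

theorem tendsto_invSqIntegral_mul_sq_div (hlam : IsLambdaSolution lam) :
    Tendsto (fun t => invSqIntegral lam t * lam t ^ 2 / t) atTop (𝓝 1) := by
  refine ((isEquivalent_iff_tendsto_one ((eventually_gt_atTop 0).mono fun t ht =>
    (div_pos ht (pow_pos (hlam.pos ht) 2)).ne')).1 hlam.isEquivalent_invSqIntegral).congr' ?_
  filter_upwards [eventually_gt_atTop 0] with t ht
  rw [Pi.div_apply, div_div_eq_mul_div]

theorem tendsto_neg_uAux_mul_log_div (hlam : IsLambdaSolution lam) :
    Tendsto (fun t => -uAux lam t * log t / t) atTop (𝓝 1) := by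
  obtain ⟨C, hC⟩ := hlam.exists_uAux_eq
  have := (hlam.tendsto_invSqIntegral_mul_sq_div.mul hlam.tendsto_log_div).sub
    ((hlam.tendsto_div_log.mul (tendsto_log_pow_div_atTop 2)).const_mul C)
  simp only [mul_one, mul_zero, sub_zero] at this
  refine this.congr' ?_
  filter_upwards [eventually_gt_atTop 1] with t ht
  rw [hC t ht.le]
  field_simp [(hlam.pos (by linarith : (0 : ℝ) < t)).ne', (log_pos ht).ne']
  ring

theorem tendsto_neg_deriv_uAux_mul_log (hlam : IsLambdaSolution lam) :
    Tendsto (fun t => -deriv (uAux lam) t * log t) atTop (𝓝 1) := by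
  obtain ⟨C, hC⟩ := hlam.exists_uAux_eq
  have hK := hlam.tendsto_invSqIntegral_mul_sq_div
  have hd := hlam.tendsto_mul_deriv
  have := (hlam.tendsto_log_div.add (((hd.mul hK).mul hlam.tendsto_log_div).mul
    hlam.tendsto_atTop.inv_tendsto_atTop)).sub
    ((hd.mul (by simpa using tendsto_log_pow_div_atTop 1)).const_mul C)
  simp only [mul_one, mul_zero, add_zero, sub_zero] at this
  refine this.congr' ?_
  filter_upwards [eventually_gt_atTop 1] with t ht
  have ht0 : 0 < t := by linarith
  have hu : HasDerivAt (uAux lam)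
      (C * deriv lam t - (deriv lam t * invSqIntegral lam t + lam t * (lam t ^ 2)⁻¹)) t :=
    (((hlam.differentiable t).hasDerivAt.const_mul C).sub ((hlam.differentiable t).hasDerivAt.mul
      (hlam.hasDerivAt_invSqIntegral ht0))).congr_of_eventuallyEq
      (eventually_of_mem (Ioi_mem_nhds ht) fun s hs => hC s (le_of_lt hs))
  rw [hu.deriv, Pi.inv_apply]
  field_simp [(hlam.pos ht0).ne']
  ring

end IsLambdaSolution

/-- Asymptotic behavior: `λ(t) ~ log t`, `e^{λ(t)} ~ t log t`, `λ'(t) ~ 1/t`,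
`u(t) ~ -t/log t`, `u'(t) ~ -1/log t` as `t → ∞`. -/
theorem asymptotics_lambda_u (lam : ℝ → ℝ) (hdiff : Differentiable ℝ lam) (h0 : lam 0 = 0)
    (hode : ∀ t : ℝ, 0 ≤ t → deriv lam t = Real.exp (-lam t) * (1 + lam t)) :
    Filter.Tendsto (fun t => lam t / Real.log t) Filter.atTop (nhds 1) ∧
    Filter.Tendsto (fun t => Real.exp (lam t) / (t * Real.log t)) Filter.atTop (nhds 1) ∧
    Filter.Tendsto (fun t => t * deriv lam t) Filter.atTop (nhds 1) ∧
    Filter.Tendsto (fun t => -uAux lam t * Real.log t / t) Filter.atTop (nhds 1) ∧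
    Filter.Tendsto (fun t => -deriv (uAux lam) t * Real.log t) Filter.atTop (nhds 1) := by
  have hlam : IsLambdaSolution lam := ⟨hdiff, h0, hode⟩
  exact ⟨hlam.tendsto_div_log, hlam.tendsto_exp_div_mul_log, hlam.tendsto_mul_deriv,
    hlam.tendsto_neg_uAux_mul_log_div, hlam.tendsto_neg_deriv_uAux_mul_log⟩
end
end
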